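/- arXiv:2303.05818 — 2 statements merged into one kernel-verified Lean document; each statement's English description precedes it below -/
import Mathlib

section
/- Let $U(r)=\sum_{n\ge1}u_n r^n$ be a power series with nonnegative coefficients summing to at most 1 (a first-return generating function), and define $\Psi$ along the curve $t=rG(r)$ by $\Psi(t) = \big(1 + \sum_{n\ge1}(n-1)u_n r^n\big)^{-1} = (rU'(r)+1-U(r))^{-1}$. Then $\Psi(0)=1$ and $\Psi(t)<1$ for $t>0$ in its domain, and $\Psi$ is strictly decreasing as a function of $t$ on $[0,\theta]$ where $\theta=RG(R)$, provided $u_n>0$ for some $n\ge 2$. -/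
open scoped BigOperators

/-- Properties of `Ψ` along the curve `t = r G(r)`: `Ψ(0) = 1`, `Ψ(t) < 1` for `t > 0`,
and `Ψ` is strictly decreasing on `[0, θ]`, where
`Ψ(rG(r)) = (r U'(r) + 1 - U(r))⁻¹` and `U(r) = ∑ uₙ rⁿ`. -/
theorem psi_strictly_decreasing (R θ : ℝ) (hR : 0 < R)
    (u : ℕ → ℝ) (G Ψ : ℝ → ℝ)
    (hu0 : u 0 = 0) (hunn : ∀ n, 0 ≤ u n)
    (husum : Summable u) (hule : (∑' n, u n) ≤ 1)
    (hsum : ∀ r ∈ Set.Icc (0 : ℝ) R, Summable (fun n : ℕ => (n : ℝ) * u n * r ^ n))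
    (hθ : θ = R * G R)
    (hGpos : ∀ r ∈ Set.Icc (0 : ℝ) R, 0 < G r)
    (hcurve : Set.BijOn (fun r => r * G r) (Set.Icc 0 R) (Set.Icc 0 θ))
    (hcurvemono : StrictMonoOn (fun r => r * G r) (Set.Icc 0 R))
    (hΨ : ∀ r ∈ Set.Icc (0 : ℝ) R,
      Ψ (r * G r) = ((∑' n : ℕ, (n : ℝ) * u n * r ^ n) + 1 - ∑' n, u n * r ^ n)⁻¹)
    (hex : ∃ n, 2 ≤ n ∧ 0 < u n) :
    Ψ 0 = 1 ∧ (∀ t ∈ Set.Ioc (0 : ℝ) θ, Ψ t < 1) ∧ StrictAntiOn Ψ (Set.Icc 0 θ) := by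
  obtain ⟨n0, hn0, hun0⟩ := hex
  -- summability of U(r)
  have hS0 : ∀ r ∈ Set.Icc (0 : ℝ) R, Summable (fun n : ℕ => u n * r ^ n) := by
    intro r hr
    refine Summable.of_nonneg_of_le
      (fun n => mul_nonneg (hunn n) (pow_nonneg hr.1 n)) ?_ (hsum r hr)
    intro n
    cases n with
    | zero => simp [hu0]
    | succ k =>
      have h1 : (1 : ℝ) ≤ ((k + 1 : ℕ) : ℝ) := by exact_mod_cast Nat.succ_le_succ (Nat.zero_le k)
      calc u (k + 1) * r ^ (k + 1) = 1 * (u (k + 1) * r ^ (k + 1)) := by ring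
        _ ≤ ((k + 1 : ℕ) : ℝ) * (u (k + 1) * r ^ (k + 1)) :=
          mul_le_mul_of_nonneg_right h1 (mul_nonneg (hunn _) (pow_nonneg hr.1 _))
        _ = ((k + 1 : ℕ) : ℝ) * u (k + 1) * r ^ (k + 1) := by ring
  -- the difference series
  set f : ℝ → ℕ → ℝ := fun r n => ((n : ℝ) - 1) * u n * r ^ n with hf
  have hfsumm : ∀ r ∈ Set.Icc (0 : ℝ) R, Summable (f r) := by
    intro r hr
    have := (hsum r hr).sub (hS0 r hr)
    refine this.congr fun n => ?_
    simp [hf]; ring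
  have hfnn : ∀ r, 0 ≤ r → ∀ n, 0 ≤ f r n := by
    intro r hr n
    cases n with
    | zero => simp [hf, hu0]
    | succ k =>
      have h1 : (0 : ℝ) ≤ ((k + 1 : ℕ) : ℝ) - 1 := by
        have : (1 : ℝ) ≤ ((k + 1 : ℕ) : ℝ) := by exact_mod_cast Nat.succ_le_succ (Nat.zero_le k)
        linarith
      exact mul_nonneg (mul_nonneg h1 (hunn _)) (pow_nonneg hr _)
  set E : ℝ → ℝ := fun r => ∑' n, f r n with hE
  have hEnn : ∀ r ∈ Set.Icc (0 : ℝ) R, 0 ≤ E r :=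
    fun r hr => tsum_nonneg (hfnn r hr.1)
  -- E is strictly monotone
  have hEmono : ∀ r1 ∈ Set.Icc (0 : ℝ) R, ∀ r2 ∈ Set.Icc (0 : ℝ) R, r1 < r2 → E r1 < E r2 := by
    intro r1 hr1 r2 hr2 hlt
    refine Summable.tsum_lt_tsum (i := n0) ?_ ?_ (hfsumm r1 hr1) (hfsumm r2 hr2)
    · intro n
      have : r1 ^ n ≤ r2 ^ n := pow_le_pow_left₀ hr1.1 hlt.le n
      cases n with
      | zero => simp [hf, hu0]
      | succ k =>
        have h1 : (0 : ℝ) ≤ ((k + 1 : ℕ) : ℝ) - 1 := by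
          have : (1 : ℝ) ≤ ((k + 1 : ℕ) : ℝ) := by exact_mod_cast Nat.succ_le_succ (Nat.zero_le k)
          linarith
        exact mul_le_mul_of_nonneg_left this (mul_nonneg h1 (hunn _))
    · have hc : (0 : ℝ) < ((n0 : ℝ) - 1) * u n0 := by
        have : (2 : ℝ) ≤ (n0 : ℝ) := by exact_mod_cast hn0
        nlinarith
      have hp : r1 ^ n0 < r2 ^ n0 :=
        pow_lt_pow_left₀ hlt hr1.1 (by omega)
      simpa [hf, mul_assoc] using mul_lt_mul_of_pos_left hp hc
  -- Ψ along the curve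
  have hΨ' : ∀ r ∈ Set.Icc (0 : ℝ) R, Ψ (r * G r) = (E r + 1)⁻¹ := by
    intro r hr
    rw [hΨ r hr]
    congr 1
    have hsub : E r = (∑' n : ℕ, (n : ℝ) * u n * r ^ n) - ∑' n, u n * r ^ n := by
      rw [hE, ← Summable.tsum_sub (hsum r hr) (hS0 r hr)]
      exact tsum_congr fun n => by simp [hf]; ring
    linarith [hsub]
  have h0mem : (0 : ℝ) ∈ Set.Icc (0 : ℝ) R := ⟨le_refl _, hR.le⟩
  have hE0 : E 0 = 0 := by
    rw [hE]
    convert tsum_zero with n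
    cases n with
    | zero => simp [hf, hu0]
    | succ k => simp [hf]
  have hΨ0 : Ψ 0 = 1 := by
    have := hΨ' 0 h0mem
    simpa [hE0] using this
  refine ⟨hΨ0, ?_, ?_⟩
  · intro t ht
    obtain ⟨r, hr, hrt⟩ := hcurve.surjOn ⟨ht.1.le, ht.2⟩
    have hrpos : 0 < r := by
      rcases hr.1.lt_or_eq with h | h
      · exact h
      · exfalso
        have : t = 0 := by
          simp only at hrt
          rw [← hrt, ← h]; ring
        exact absurd this ht.1.ne'
    have hEr : 0 < E r := hE0 ▸ hEmono 0 h0mem r hr hrpos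
    have : Ψ t = (E r + 1)⁻¹ := by rw [← hrt]; exact hΨ' r hr
    rw [this]
    rw [inv_lt_one_iff₀]
    right; linarith
  · intro t1 ht1 t2 ht2 hlt
    obtain ⟨r1, hr1, hrt1⟩ := hcurve.surjOn ht1
    obtain ⟨r2, hr2, hrt2⟩ := hcurve.surjOn ht2
    try simp only at hrt1 hrt2
    have hrlt : r1 < r2 := by
      by_contra h
      push_neg at h
      rcases h.lt_or_eq with h | h
      · have hmm : r2 * G r2 < r1 * G r1 := hcurvemono hr2 hr1 h
        rw [hrt1, hrt2] at hmm
        linarith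
      · rw [h] at hrt2
        rw [hrt1] at hrt2
        linarith
    have hE12 : E r1 < E r2 := hEmono r1 hr1 r2 hr2 hrlt
    have h1 : Ψ t1 = (E r1 + 1)⁻¹ := by rw [← hrt1]; exact hΨ' r1 hr1
    have h2 : Ψ t2 = (E r2 + 1)⁻¹ := by rw [← hrt2]; exact hΨ' r2 hr2
    rw [h1, h2]
    have hp1 : 0 < E r1 + 1 := by linarith [hEnn r1 hr1]
    exact inv_strictAnti₀ hp1 (by linarith)
end

section
/- Let $G:[0,R)\to(0,\infty)$ be increasing and differentiable, extending continuously to $R$ with $G(R)<\infty$, with $G'(r)\to\infty$ as $r\to R^-$. Suppose $\frac{1}{G'(r)} \sim -C\,(G(R)-G(r))\log(G(R)-G(r))$ as $r\to R^-$ for some $C>0$. Then $G'(r) \sim C''\,\big(-(R-r)\log(R-r)\big)^{-1/2}$ as $r\to R^-$ for some constant $C''>0$. -/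
/-!
Write `H = G(R) - G(r)`, so that `dH/dr ~ 1 / (C H log H)`. Since `u² (log u - 1/2)` has
derivative `2 u log u`, L'Hôpital's rule integrates this to `H² log H ~ (2/C) (r - R)`. Taking
logarithms gives `2 log H ~ log (R - r)`, and substituting both relations into
`G' ~ 1 / (C H |log H|)` yields `G'² ~ 1 / (C (R - r) |log (R - r)|)`.
-/

open Filter Topology Asymptotics Real

variable {α : Type*} {l : Filter α}

namespace Asymptotics

theorem IsEquivalent.rpow_of_eventually_nonneg {u v : α → ℝ} (hv : ∀ᶠ t in l, 0 ≤ v t)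
    (h : u ~[l] v) (r : ℝ) : (fun t => u t ^ r) ~[l] fun t => v t ^ r := by
  have hmax : v =ᶠ[l] fun t => max (v t) 0 := hv.mono fun t ht => (max_eq_left ht).symm
  refine ((h.congr_right hmax).rpow (fun t => le_max_right _ _) (r := r)).congr_right ?_
  exact hv.mono fun t ht => by simp [max_eq_left ht]

theorem IsEquivalent.log_of_tendsto_nhdsGT_zero {f g : α → ℝ} (hfg : f ~[l] g)
    (hg : Tendsto g l (𝓝[>] 0)) : (fun t => Real.log (f t)) ~[l] fun t => Real.log (g t) := by
  simpa [Real.log_inv] using (hfg.inv.log (tendsto_inv_nhdsGT_zero.comp hg)).neg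

end Asymptotics

theorem isEquivalent_of_hasDerivAt_nhdsLT {a : ℝ} {f g f' g' : ℝ → ℝ}
    (hff' : ∀ᶠ x in 𝓝[<] a, HasDerivAt f (f' x) x) (hgg' : ∀ᶠ x in 𝓝[<] a, HasDerivAt g (g' x) x)
    (hg' : ∀ᶠ x in 𝓝[<] a, g' x ≠ 0) (hfa : Tendsto f (𝓝[<] a) (𝓝 0))
    (hga : Tendsto g (𝓝[<] a) (𝓝 0)) (hf'g' : f' ~[𝓝[<] a] g') : f ~[𝓝[<] a] g :=
  isEquivalent_of_tendsto_one <| HasDerivAt.lhopital_zero_nhdsLT hff' hgg' hg' hfa hga <|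
    (isEquivalent_iff_tendsto_one hg').mp hf'g'

theorem hasDerivAt_sq_mul_log_sub_half {u : ℝ} (hu : u ≠ 0) :
    HasDerivAt (fun u => u ^ 2 * (log u - 1 / 2)) (2 * u * log u) u := by
  refine ((hasDerivAt_pow 2 u).mul ((hasDerivAt_log hu).sub_const _)).congr_deriv ?_
  field_simp
  ring

theorem tendsto_sq_mul_log_sub_half_nhdsGT_zero :
    Tendsto (fun u => u ^ 2 * (log u - 1 / 2)) (𝓝[>] 0) (𝓝 0) := by
  have hlog : Tendsto (fun u : ℝ => log u * u ^ 2) (𝓝[>] 0) (𝓝 0) := by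
    simpa using tendsto_log_mul_rpow_nhdsGT_zero (r := 2) two_pos
  have hsq : Tendsto (fun u : ℝ => u ^ 2) (𝓝[>] 0) (𝓝 0) := by
    simpa using ((continuous_pow 2).tendsto (0 : ℝ)).mono_left nhdsWithin_le_nhds
  have h := hlog.sub (hsq.const_mul (1 / 2))
  rw [mul_zero, sub_zero] at h
  exact h.congr fun u => by ring

theorem sq_mul_log_isEquivalent_of_inv_deriv_isEquivalent {a C : ℝ} (hC : C ≠ 0) {H H' : ℝ → ℝ}
    (hH : Tendsto H (𝓝[<] a) (𝓝[>] 0)) (hderiv : ∀ᶠ x in 𝓝[<] a, HasDerivAt H (H' x) x)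
    (hode : (fun x => 1 / H' x) ~[𝓝[<] a] fun x => C * H x * log (H x)) :
    (fun x => H x ^ 2 * log (H x)) ~[𝓝[<] a] fun x => 2 / C * (x - a) := by
  have hHpos : ∀ᶠ x in 𝓝[<] a, 0 < H x := hH.eventually eventually_mem_nhdsWithin
  have hlog : Tendsto (fun x => log (H x)) (𝓝[<] a) atBot := tendsto_log_nhdsGT_zero.comp hH
  have hne : ∀ᶠ x in 𝓝[<] a, C * H x * log (H x) ≠ 0 := by
    filter_upwards [hHpos, hlog.eventually_lt_atBot 0] with x hx hlx
    exact mul_ne_zero (mul_ne_zero hC hx.ne') hlx.ne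
  have hf'g' : (fun x => C * H x * log (H x) * H' x) ~[𝓝[<] a] fun _ => 1 := by
    have hH' : H' ~[𝓝[<] a] fun x => (C * H x * log (H x))⁻¹ :=
      hode.inv.congr_left (.of_forall fun x => by simp)
    refine (IsEquivalent.refl.mul hH').congr_right ?_
    filter_upwards [hne] with x hx using mul_inv_cancel₀ hx
  have hprim : (fun x => C / 2 * (H x ^ 2 * (log (H x) - 1 / 2))) ~[𝓝[<] a] fun x => x - a := by
    refine isEquivalent_of_hasDerivAt_nhdsLT ?_ (.of_forall fun x => (hasDerivAt_id x).sub_const a)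
      (.of_forall fun _ => one_ne_zero) ?_ ?_ hf'g'
    · filter_upwards [hHpos, hderiv] with x hx hdx
      refine (((hasDerivAt_sq_mul_log_sub_half hx.ne').comp x hdx).const_mul (C / 2)).congr_deriv ?_
      ring
    · simpa using (tendsto_sq_mul_log_sub_half_nhdsGT_zero.comp hH).const_mul (C / 2)
    · simpa using (tendsto_id.sub_const a).mono_left (nhdsWithin_le_nhds (a := a))
  have hhalf : (fun x => log (H x) - 1 / 2) ~[𝓝[<] a] fun x => log (H x) :=
    IsEquivalent.refl.sub_isLittleO <| isLittleO_const_left.2 <|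
      Or.inr (tendsto_abs_atBot_atTop.comp hlog)
  refine ((IsEquivalent.refl.mul hhalf).symm.trans ?_)
  refine ((IsEquivalent.refl (u := fun _ => 2 / C)).mul hprim).congr_left ?_
  exact .of_forall fun x => by simp only [Pi.mul_apply]; field_simp

theorem two_mul_log_isEquivalent_log_of_sq_mul_log_isEquivalent {x y : α → ℝ} {c : ℝ}
    (hc : 0 < c) (hx : Tendsto x l (𝓝[>] 0)) (hy : Tendsto y l (𝓝[>] 0))
    (h : (fun t => x t ^ 2 * log (x t)) ~[l] fun t => -(c * y t)) :
    (fun t => 2 * log (x t)) ~[l] fun t => log (y t) := by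
  have hxpos : ∀ᶠ t in l, 0 < x t := hx.eventually eventually_mem_nhdsWithin
  have hlogx : Tendsto (fun t => log (x t)) l atBot := tendsto_log_nhdsGT_zero.comp hx
  have hlogy : Tendsto (fun t => log (y t)) l atBot := tendsto_log_nhdsGT_zero.comp hy
  have hcy : Tendsto (fun t => c * y t) l (𝓝[>] 0) :=
    tendsto_nhdsWithin_iff.2 ⟨by simpa using (hy.mono_right nhdsWithin_le_nhds).const_mul c,
      (hy.eventually eventually_mem_nhdsWithin).mono fun t ht => mul_pos hc ht⟩
  have hneg : (fun t => x t ^ 2 * -log (x t)) ~[l] fun t => c * y t :=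
    (h.neg.congr_left (.of_forall fun t => by ring)).congr_right (.of_forall fun t => by ring)
  have hlog := hneg.log_of_tendsto_nhdsGT_zero hcy
  have hloglog : (fun t => log (-log (x t))) =o[l] fun t => 2 * log (x t) :=
    ((isLittleO_log_id_atTop.comp_tendsto (tendsto_neg_atBot_atTop.comp hlogx)).neg_right
      |>.const_mul_right two_ne_zero).congr_right fun t => by simp
  have hleft : (fun t => 2 * log (x t)) ~[l] fun t => log (x t ^ 2 * -log (x t)) := by
    refine (IsEquivalent.refl.add_isLittleO hloglog).symm.congr_right ?_
    filter_upwards [hxpos, hlogx.eventually_lt_atBot 0] with t hxt hlxt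
    rw [Pi.add_apply, log_mul (pow_ne_zero 2 hxt.ne') (neg_ne_zero.2 hlxt.ne), log_pow,
      Nat.cast_ofNat]
  have hright : (fun t => log (c * y t)) ~[l] fun t => log (y t) := by
    refine (IsEquivalent.refl.add_isLittleO ((isLittleO_const_left (c := log c)).2
      (Or.inr (tendsto_abs_atBot_atTop.comp hlogy)))).congr_left ?_
    filter_upwards [hy.eventually eventually_mem_nhdsWithin] with t hyt
    exact (add_comm _ _).trans (log_mul hc.ne' hyt.ne').symm
  exact hleft.trans (hlog.trans hright)

theorem sq_rpow_neg_half {x : ℝ} (hx : 0 ≤ x) : (x ^ 2) ^ (-(1 / 2) : ℝ) = x⁻¹ := by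
  rw [← rpow_natCast, ← rpow_mul hx, show ((2 : ℕ) : ℝ) * -(1 / 2) = -1 by norm_num, rpow_neg_one]

theorem isEquivalent_rpow_neg_half_of_sq_mul_log_isEquivalent {D H y : α → ℝ} {C : ℝ}
    (hC : 0 < C) (hH : Tendsto H l (𝓝[>] 0)) (hy : Tendsto y l (𝓝[>] 0))
    (hD : (fun t => 1 / D t) ~[l] fun t => -(C * H t * log (H t)))
    (hint : (fun t => H t ^ 2 * log (H t)) ~[l] fun t => -(2 / C * y t)) :
    D ~[l] fun t => C ^ (-(1 / 2) : ℝ) * (-(y t * log (y t))) ^ (-(1 / 2) : ℝ) := by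
  have hHpos : ∀ᶠ t in l, 0 < H t := hH.eventually eventually_mem_nhdsWithin
  have hypos : ∀ᶠ t in l, 0 < y t := hy.eventually eventually_mem_nhdsWithin
  have hlogH : ∀ᶠ t in l, log (H t) < 0 :=
    (tendsto_log_nhdsGT_zero.comp hH).eventually_lt_atBot 0
  have hyM : ∀ᶠ t in l, 0 ≤ -(y t * log (y t)) := by
    filter_upwards [hypos, (tendsto_log_nhdsGT_zero.comp hy).eventually_lt_atBot 0] with t hyt hlt
    exact neg_nonneg.2 (mul_neg_of_pos_of_neg hyt hlt).le
  have hlog := two_mul_log_isEquivalent_log_of_sq_mul_log_isEquivalent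
    (div_pos two_pos hC) hH hy hint
  have hinv : D ~[l] fun t => ((C * H t * -log (H t)) ^ 2) ^ (-(1 / 2) : ℝ) := by
    refine hD.inv.congr_left (.of_forall fun t => by simp) |>.congr_right ?_
    filter_upwards [hHpos, hlogH] with t hHt hlt
    rw [sq_rpow_neg_half (mul_pos (mul_pos hC hHt) (neg_pos.2 hlt)).le]
    simp
  have hsq : (fun t => (C * H t * -log (H t)) ^ 2) ~[l] fun t => C * -(y t * log (y t)) := by
    refine (((IsEquivalent.refl (u := fun _ => C ^ 2 / 2)).mul hint).mul hlog).congr_left ?_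
      |>.congr_right ?_
    · exact .of_forall fun t => by simp only [Pi.mul_apply]; ring
    · exact .of_forall fun t => by simp only [Pi.mul_apply]; field_simp
  refine hinv.trans ((hsq.rpow_of_eventually_nonneg ?_ _).congr_right ?_)
  · filter_upwards [hyM] with t ht using mul_nonneg hC.le ht
  · filter_upwards [hyM] with t ht using mul_rpow hC.le ht

theorem asymptotic_integration_d6_general (R C : ℝ) (G : ℝ → ℝ)
    (hR : 0 < R) (hC : 0 < C)
    (hGmono : StrictMonoOn G (Set.Icc 0 R))
    (hGdiff : ∀ r ∈ Set.Ico (0 : ℝ) R, DifferentiableAt ℝ G r)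
    (hGcont : ContinuousWithinAt G (Set.Iic R) R)
    (hode : (fun r => 1 / deriv G r) ~[𝓝[<] R]
      fun r => -(C * (G R - G r) * Real.log (G R - G r))) :
    ∃ C'' > 0, deriv G ~[𝓝[<] R]
      fun r => C'' * (-((R - r) * Real.log (R - r))) ^ (-(1 / 2) : ℝ) := by
  have hnear : ∀ᶠ r in 𝓝[<] R, r ∈ Set.Ioo 0 R := Ioo_mem_nhdsLT hR
  have hH : Tendsto (fun r => G R - G r) (𝓝[<] R) (𝓝[>] 0) := by
    refine tendsto_nhdsWithin_iff.2 ⟨?_, ?_⟩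
    · simpa using
        (hGcont.tendsto.mono_left (nhdsWithin_mono R Set.Iio_subset_Iic_self)).const_sub (G R)
    · filter_upwards [hnear] with r hr
      exact sub_pos.2 (hGmono ⟨hr.1.le, hr.2.le⟩ ⟨hR.le, le_rfl⟩ hr.2)
  have hy : Tendsto (fun r => R - r) (𝓝[<] R) (𝓝[>] 0) := by
    refine tendsto_nhdsWithin_iff.2
      ⟨?_, eventually_mem_nhdsWithin.mono fun r hr => Set.mem_Ioi.2 (sub_pos.2 hr)⟩
    simpa using ((tendsto_id (x := 𝓝 R)).const_sub R).mono_left nhdsWithin_le_nhds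
  have hderiv : ∀ᶠ r in 𝓝[<] R, HasDerivAt (fun r => G R - G r) (-deriv G r) r := by
    filter_upwards [hnear] with r hr
    simpa using ((hGdiff r ⟨hr.1.le, hr.2⟩).hasDerivAt.const_sub (G R))
  have hint := sq_mul_log_isEquivalent_of_inv_deriv_isEquivalent hC.ne' hH hderiv <|
    hode.neg.congr_left (.of_forall fun r => (div_neg _).symm)
      |>.congr_right (.of_forall fun r => by simp)
  exact ⟨C ^ (-(1 / 2) : ℝ), rpow_pos_of_pos hC _,
    isEquivalent_rpow_neg_half_of_sq_mul_log_isEquivalent hC hH hy hode <|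
      hint.congr_right (.of_forall fun r => by ring)⟩

/-- Integration of the asymptotic differential equation
`1/G'(r) ∼ -C (G(R)-G(r)) log(G(R)-G(r))`: then
`G'(r) ∼ C'' (-(R-r) log(R-r))^{-1/2}` as `r → R⁻` for some `C'' > 0`. -/
theorem asymptotic_integration_d6 (R C : ℝ) (G : ℝ → ℝ)
    (hR : 0 < R) (hC : 0 < C)
    (hGpos : ∀ r ∈ Set.Icc (0 : ℝ) R, 0 < G r)
    (hGmono : StrictMonoOn G (Set.Icc 0 R))
    (hGdiff : ∀ r ∈ Set.Ico (0 : ℝ) R, DifferentiableAt ℝ G r)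
    (hGcont : ContinuousWithinAt G (Set.Iic R) R)
    (hG' : Tendsto (deriv G) (𝓝[<] R) atTop)
    (hode : (fun r => 1 / deriv G r) ~[𝓝[<] R]
      fun r => -(C * (G R - G r) * Real.log (G R - G r))) :
    ∃ C'' > 0, deriv G ~[𝓝[<] R]
      fun r => C'' * (-((R - r) * Real.log (R - r))) ^ (-(1 / 2) : ℝ) :=
  asymptotic_integration_d6_general R C G hR hC hGmono hGdiff hGcont hode
end
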